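/- arXiv:0909.1305 — 3 statements merged into one kernel-verified Lean document; each statement's English description precedes it below -/
import Mathlib

section
/- If ω is a real harmonic 1-form on the graph Γ of a compact discrete Riemann surface, then ω + i*ω is a discrete holomorphic 1-form (closed and of type (1,0)). -/
open Complex BigOperators Finset

/-- The double `Λ = Γ ⊕ Γ*` of a cellular decomposition `Γ` of a surface and its dual `Γ*`,
equipped with a discrete conformal structure `ρ : Λ₁ → ℝ₊` satisfying `ρ(e*) = 1/ρ(e)`.
Edges are oriented (each unoriented edge appears with both orientations); `rev` reverses
orientation, `dual` sends an edge to its dual edge (rotated by `+π/2`), so `(e*)* = -e`,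
i.e. `dual (dual e) = rev e`. -/
structure DCS where
  V : Type
  E : Type
  tail : E → V
  head : E → V
  rev : E → E
  dual : E → E
  inGamma : E → Bool
  rho : E → ℝ
  rev_rev : ∀ e, rev (rev e) = e
  tail_rev : ∀ e, tail (rev e) = head e
  dual_dual : ∀ e, dual (dual e) = rev e
  dual_rev : ∀ e, dual (rev e) = rev (dual e)
  inGamma_dual : ∀ e, inGamma (dual e) = !inGamma e
  inGamma_rev : ∀ e, inGamma (rev e) = inGamma e
  rho_pos : ∀ e, 0 < rho e
  rho_rev : ∀ e, rho (rev e) = rho e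
  rho_dual : ∀ e, rho (dual e) = (rho e)⁻¹

/-- A discrete 1-form on `Λ`: it changes sign under orientation reversal of an edge. -/
def IsOneForm (S : DCS) (α : S.E → ℂ) : Prop := ∀ e, α (S.rev e) = -α e

/-- The discrete Hodge star, defined by `∫_{e*} *α := ρ(e) ∫_e α`; for 1-forms this is
equivalently `∫_e *α = -ρ(e*) ∫_{e*} α`, which we take as the pointwise formula. -/
noncomputable def hstar (S : DCS) (α : S.E → ℂ) : S.E → ℂ :=
  fun e => -(S.rho (S.dual e) : ℂ) * α (S.dual e)

/-!
On a 1-form, `∗ω` evaluated on a dual edge `e*` is `ρ(e) ω(e)`, so the face sums of `∗ω` over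
`Λ` are exactly the coclosedness sums of `ω`; together with closedness this makes `ω + i∗ω`
closed. Since `ρ(e*) ρ(e) = 1`, the Hodge star squares to `-1` on 1-forms, which is what makes
`ω + i∗ω` an eigenform of `∗` with eigenvalue `-i`.
-/

namespace DCS

variable {S : DCS} {α : S.E → ℂ}

theorem hstar_apply_dual (hα : IsOneForm S α) (e : S.E) :
    hstar S α (S.dual e) = S.rho e * α e := by
  simp only [hstar, S.dual_dual, S.rho_rev, hα e]
  ring

theorem hstar_hstar (hα : IsOneForm S α) : hstar S (hstar S α) = -α := by
  funext e
  have hρ : (S.rho e : ℂ) ≠ 0 := by exact_mod_cast (S.rho_pos e).ne'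
  calc hstar S (hstar S α) e = -(S.rho (S.dual e) : ℂ) * (S.rho e * α e) := by
        rw [hstar, hstar_apply_dual hα]
    _ = -α e := by
        rw [S.rho_dual, ofReal_inv]
        field_simp

theorem hstar_add_mul (β : S.E → ℂ) (c : ℂ) :
    hstar S (fun e => α e + c * β e) = fun e => hstar S α e + c * hstar S β e := by
  funext e
  simp only [hstar]
  ring

theorem hstar_add_I_mul_hstar (hα : IsOneForm S α) (e : S.E) :
    hstar S (fun e' => α e' + I * hstar S α e') e = -I * (α e + I * hstar S α e) := by
  rw [hstar_add_mul, hstar_hstar hα]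
  simp only [Pi.neg_apply]
  linear_combination hstar S α e * I_sq

end DCS

/-- Faces of `Λ` are in bijection with the vertices `Λ₀`: the boundary of the face around a
vertex `v` consists of the dual edges `dual e` of the edges `e` emanating from `v`, so
closedness of a 1-form `α` reads `Σ_{tail e = v} ∫_{dual e} α = 0` for all `v`. -/
theorem harmonic_gives_holomorphic_general (S : DCS) [Fintype S.E] [DecidableEq S.V]
    (ω : S.E → ℂ)
    (h1 : IsOneForm S ω)
    (hclosed : ∀ v : S.V,
      ∑ e ∈ Finset.univ.filter (fun e => S.tail e = v), ω (S.dual e) = 0)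
    (hcoclosed : ∀ v : S.V,
      ∑ e ∈ Finset.univ.filter (fun e => S.tail e = v), (S.rho e : ℂ) * ω e = 0) :
    (∀ v : S.V,
      ∑ e ∈ Finset.univ.filter (fun e => S.tail e = v),
        (ω (S.dual e) + Complex.I * hstar S ω (S.dual e)) = 0) ∧
    (∀ e, hstar S (fun e' => ω e' + Complex.I * hstar S ω e') e
        = -Complex.I * (ω e + Complex.I * hstar S ω e)) := by
  refine ⟨fun v => ?_, DCS.hstar_add_I_mul_hstar h1⟩
  simp only [Finset.sum_add_distrib, ← Finset.mul_sum, DCS.hstar_apply_dual h1, hclosed v,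
    hcoclosed v, mul_zero, add_zero]

/-- if `ω` is a real harmonic 1-form on the graph `Γ` of a compact discrete
Riemann surface (closed: `dω = 0` on every face of `Γ`, and coclosed: `d*ω = 0`, i.e.
`Σ_{e ∋ x} ρ(e) ∫_e ω = 0` at every vertex), then `ω + i*ω` is a discrete holomorphic
1-form: it is closed on `Λ` and of type `(1,0)` (`*α = −iα`).

Faces of `Λ` are in bijection with the vertices `Λ₀`: the boundary of the face around a
vertex `v` consists of the dual edges `dual e` of the edges `e` emanating from `v`, so
closedness of a 1-form `α` reads `Σ_{tail e = v} ∫_{dual e} α = 0` for all `v`. -/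
theorem harmonic_gives_holomorphic (S : DCS) [Fintype S.E] [DecidableEq S.V]
    (ω : S.E → ℂ)
    (hreal : ∀ e, (ω e).im = 0)
    (h1 : IsOneForm S ω)
    (hsupp : ∀ e, S.inGamma e = false → ω e = 0)
    (hclosed : ∀ v : S.V,
      ∑ e ∈ Finset.univ.filter (fun e => S.tail e = v), ω (S.dual e) = 0)
    (hcoclosed : ∀ v : S.V,
      ∑ e ∈ Finset.univ.filter (fun e => S.tail e = v), (S.rho e : ℂ) * ω e = 0) :
    (∀ v : S.V,
      ∑ e ∈ Finset.univ.filter (fun e => S.tail e = v),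
        (ω (S.dual e) + Complex.I * hstar S ω (S.dual e)) = 0) ∧
    (∀ e, hstar S (fun e' => ω e' + Complex.I * hstar S ω e') e
        = -Complex.I * (ω e + Complex.I * hstar S ω e)) :=
  harmonic_gives_holomorphic_general S ω h1 hclosed hcoclosed
end

section
/- The discrete exterior derivative is a derivation for the wedge product: for functions f and 1-forms α on the double graph, d(fα) = df ∧ α + f dα as 2-forms on quad-graph faces, where f is averaged appropriately on the diagonals. -/
theorem d_is_derivation_for_wedge_general {V : Type*} (f : V → ℂ) (α : V → V → ℂ)
    (x y x' y' : V) :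
    -- d(fα) : sum of fα over the boundary x→y→x'→y'→x
    ((f x + f y) / 2 * α x y + (f y + f x') / 2 * α y x'
        + (f x' + f y') / 2 * α x' y' + (f y' + f x) / 2 * α y' x)
      -- df ∧ α
      = (1/2) * ((f x' - f x) * ((α y x' + α x' y' - α y' x - α x y) / 2)
            - (f y' - f y) * ((α x y + α y x' - α x' y' - α y' x) / 2))
        -- + f dα
        + ((f x + f y + f x' + f y') / 4) * (α x y + α y x' + α x' y' + α y' x) := by
  ring

/-- the discrete exterior derivative is a derivation for the wedge product:
for a function `f` on the vertices of the quad-graph and a 1-form `α`,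
`d(fα) = df ∧ α + f dα` on every face `(x,y,x',y')`, where:
* `fα` is the 1-form with `∫_{(u,w)} fα = ((f(u)+f(w))/2) ∫_{(u,w)} α`,
* `d` of a 1-form on a face is the sum of the form over the four boundary edges
  `x→y→x'→y'→x`,
* the wedge product is
  `∬ α∧β = ½(∫_{(x,x')}α ∫_{(y,y')}β − ∫_{(y,y')}α ∫_{(x,x')}β)`, the integral of a
  1-form along a diagonal being the average of its integrals along the two boundary paths
  joining the diagonal's endpoints,
* `f dα` multiplies `dα` by the average of `f` over the four vertices of the face. -/
theorem d_is_derivation_for_wedge {V : Type*} (f : V → ℂ) (α : V → V → ℂ)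
    (hα : ∀ u w, α u w = -α w u) (x y x' y' : V) :
    -- d(fα) : sum of fα over the boundary x→y→x'→y'→x
    ((f x + f y) / 2 * α x y + (f y + f x') / 2 * α y x'
        + (f x' + f y') / 2 * α x' y' + (f y' + f x) / 2 * α y' x)
      -- df ∧ α
      = (1/2) * ((f x' - f x) * ((α y x' + α x' y' - α y' x - α x y) / 2)
            - (f y' - f y) * ((α x y + α y x' - α x' y' - α y' x) / 2))
        -- + f dα
        + ((f x + f y + f x' + f y') / 4) * (α x y + α y x' + α x' y' + α y' x) :=
  d_is_derivation_for_wedge_general f α x y x' y'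
end

section
/- The genus 2 hyperelliptic curve y² = x⁶ − 1 has period matrix Ω = (i/√3)·[[2, −1], [−1, 2]] with respect to a suitable canonical homology basis. -/
/-!
The differentials `x^j dx / y` (`j = 0, 1`) pick up the factors `ζ^(j+1)` and `-1` under the
automorphisms `τ (x, y) = (ζ x, y)`, `ζ = e^{iπ/3}`, and `ι (x, y) = (x, -y)`. So once one loop `δ`
around the branch points `1` and `ζ` has nonzero periods `P₀, P₁`, the loops `δ, ιτ⁴δ` and
`τδ, τ³δ` have periods `P_j` times powers of `ζ`, and the normalization and the period matrix
reduce to identities in `ℚ(ζ)`. The periods of `δ` are nonzero because their integrands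
`w^j / √q` have positive real part: `w` and `√q` both lie in the sector `|arg| < π/4`.
-/

open Complex intervalIntegral

/-- A closed `C¹` loop on the affine part of the genus 2 curve `y² = x⁶ − 1`, avoiding the
branch points (where `y = 0`). -/
structure CurveLoop where
  γ : ℝ → ℂ × ℂ
  smooth : ContDiff ℝ 1 γ
  on_curve : ∀ t, (γ t).2 ^ 2 = (γ t).1 ^ 6 - 1
  y_ne_zero : ∀ t, (γ t).2 ≠ 0
  closed : γ 0 = γ 1

/-- The period `∫_γ x^j dx / y` of the holomorphic differential `ω_j = x^j dx / y`
(`j = 0, 1` give a basis of holomorphic 1-forms of the curve) along a loop. -/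
noncomputable def period (j : ℕ) (c : CurveLoop) : ℂ :=
  ∫ t in (0:ℝ)..1, (c.γ t).1 ^ j / (c.γ t).2 * deriv (fun s => (c.γ s).1) t

namespace Complex

variable {z w : ℂ}

@[fun_prop]
lemma contDiff_ofReal {n : WithTop ℕ∞} : ContDiff ℝ n ((↑) : ℝ → ℂ) := ofRealCLM.contDiff

lemma re_pos_of_abs_im_lt_re (h : |z.im| < z.re) : 0 < z.re :=
  (abs_nonneg _).trans_lt h

lemma abs_im_inv_lt_re_inv (h : |z.im| < z.re) : |(z⁻¹).im| < (z⁻¹).re := by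
  have hz : 0 < normSq z := normSq_pos.mpr (ne_zero_of_re_pos (re_pos_of_abs_im_lt_re h))
  rw [inv_re, inv_im, abs_div, abs_neg, abs_of_pos hz]
  exact div_lt_div_of_pos_right h hz

lemma re_mul_pos_of_abs_im_lt_re (hz : |z.im| < z.re) (hw : |w.im| < w.re) : 0 < (z * w).re := by
  have : z.im * w.im ≤ |z.im| * |w.im| := by rw [← abs_mul]; exact le_abs_self _
  rw [mul_re]
  nlinarith [abs_nonneg z.im, abs_nonneg w.im]

lemma re_cpow_inv_two_nonneg (z : ℂ) : 0 ≤ (z ^ (2⁻¹ : ℂ)).re := by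
  rcases eq_or_ne z 0 with rfl | hz
  · simp
  rw [cpow_def_of_ne_zero hz, exp_re]
  refine mul_nonneg (Real.exp_pos _).le (Real.cos_nonneg_of_neg_pi_div_two_le_of_le ?_ ?_)
  all_goals
    simp only [mul_im, log_re, log_im, inv_re, inv_im]
    norm_num
    linarith [neg_pi_lt_arg z, arg_le_pi z]

lemma abs_im_cpow_inv_two_lt_re (hz : 0 < z.re) :
    |(z ^ (2⁻¹ : ℂ)).im| < (z ^ (2⁻¹ : ℂ)).re := by
  set s := z ^ (2⁻¹ : ℂ)
  have hs : s ^ 2 = z := cpow_ofNat_inv_pow z 2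
  have : s.im ^ 2 < s.re ^ 2 := by
    rw [← hs] at hz
    simp only [sq, mul_re] at hz ⊢
    linarith
  exact abs_lt_of_sq_lt_sq this (re_cpow_inv_two_nonneg z)

end Complex

lemma intervalIntegral_ne_zero_of_re_pos {f : ℝ → ℂ} {a b : ℝ} (hab : a < b) (hf : Continuous f)
    (hpos : ∀ x, 0 < (f x).re) : ∫ x in a..b, f x ≠ 0 := by
  have hre : (∫ x in a..b, f x).re = ∫ x in a..b, (f x).re :=
    (reCLM.intervalIntegral_comp_comm (hf.intervalIntegrable a b)).symm
  intro h
  have := intervalIntegral_pos_of_pos (f := fun x => (f x).re)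
    ((continuous_re.comp hf).intervalIntegrable a b) hpos hab
  rw [← hre, h, zero_re] at this
  exact this.false

namespace CurveLoop

def rotate (ζ : ℂ) (hζ : ζ ^ 6 = 1) (c : CurveLoop) : CurveLoop where
  γ t := (ζ * (c.γ t).1, (c.γ t).2)
  smooth := (contDiff_const.mul (contDiff_fst.comp c.smooth)).prodMk (contDiff_snd.comp c.smooth)
  on_curve t := by rw [mul_pow, hζ, one_mul]; exact c.on_curve t
  y_ne_zero t := c.y_ne_zero t
  closed := by rw [c.closed]

def swapSheets (c : CurveLoop) : CurveLoop where
  γ t := ((c.γ t).1, -(c.γ t).2)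
  smooth := (contDiff_fst.comp c.smooth).prodMk (contDiff_snd.comp c.smooth).neg
  on_curve t := by rw [neg_sq]; exact c.on_curve t
  y_ne_zero t := neg_ne_zero.mpr (c.y_ne_zero t)
  closed := by rw [c.closed]

lemma period_rotate (j : ℕ) (ζ : ℂ) (hζ : ζ ^ 6 = 1) (c : CurveLoop) :
    period j (c.rotate ζ hζ) = ζ ^ (j + 1) * period j c := by
  rw [period, period, ← integral_const_mul]
  refine integral_congr fun t _ => ?_
  have hx : DifferentiableAt ℝ (fun s => (c.γ s).1) t :=
    ((contDiff_fst.comp c.smooth).differentiable one_ne_zero).differentiableAt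
  simp only [rotate, deriv_const_mul _ hx]
  ring

lemma period_swapSheets (j : ℕ) (c : CurveLoop) : period j c.swapSheets = -period j c := by
  rw [period, period, ← integral_neg]
  refine integral_congr fun t _ => ?_
  simp only [swapSheets, div_neg, neg_mul]

end CurveLoop

noncomputable section

namespace LawsonLoop

open scoped Real

lemma sqrt_three_sq : (√3 : ℂ) ^ 2 = 3 := by
  rw [← ofReal_pow, Real.sq_sqrt (by norm_num)]; norm_num

lemma sqrt_three_mem : 1.72 < √3 ∧ √3 < 1.74 := by
  have h := Real.sq_sqrt (show (0 : ℝ) ≤ 3 by norm_num)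
  have h0 := Real.sqrt_nonneg 3
  constructor <;> nlinarith

/-- `η = e^{iπ/6}` and `ζ = η² = e^{iπ/3}`. -/
def η : ℂ := (√3 + I) / 2
def ζ : ℂ := (1 + √3 * I) / 2

lemma η_sq : η ^ 2 = ζ := by
  rw [η, ζ]; linear_combination (1 / 4 : ℂ) * sqrt_three_sq + (1 / 4 : ℂ) * I_sq

lemma ζ_sq : ζ ^ 2 = ζ - 1 := by
  rw [ζ]; linear_combination (3 / 4 : ℂ) * I_sq + (I ^ 2 / 4) * sqrt_three_sq

lemma ζ_pow_three : ζ ^ 3 = -1 := by linear_combination (ζ + 1) * ζ_sq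

lemma η_pow_six : η ^ 6 = -1 := by rw [pow_mul η 2 3, η_sq, ζ_pow_three]

lemma η_ne_zero : η ≠ 0 := fun h => by simpa [h] using η_pow_six

lemma ζ_pow_pow_six (n : ℕ) : (ζ ^ n) ^ 6 = 1 := by
  rw [← pow_mul, mul_comm, pow_mul, show ζ ^ 6 = (ζ ^ 3) ^ 2 by ring, ζ_pow_three]; norm_num

lemma I_div_sqrt_three : I / (√3 : ℂ) = (2 * ζ - 1) / 3 := by
  have : (√3 : ℂ) ≠ 0 := ofReal_ne_zero.mpr (by positivity)
  rw [ζ, div_eq_div_iff this three_ne_zero]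
  linear_combination (-I) * sqrt_three_sq

/-- `w = √3/2 + (i/2) (v + v⁻¹)/2` and `k = (v - v⁻¹)/2` for `v = (7/6) e^{2πit}`, so `w` runs
once around the segment `[e^{-iπ/6}, e^{iπ/6}]` joining two zeros of `w⁶ + 1`. -/
def w (t : ℝ) : ℂ := ((√3 / 2 - 13 / 168 * Real.sin (2 * π * t) : ℝ) : ℂ)
  + ((85 / 168 * Real.cos (2 * π * t) : ℝ) : ℂ) * I
def k (t : ℝ) : ℂ := ((13 / 84 * Real.cos (2 * π * t) : ℝ) : ℂ)
  + ((85 / 84 * Real.sin (2 * π * t) : ℝ) : ℂ) * I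
def q (t : ℝ) : ℂ := (w t ^ 2 + √3 * w t + 1) * (w t ^ 2 + 1)

lemma k_sq (t : ℝ) : k t ^ 2 = -4 * (w t ^ 2 - √3 * w t + 1) := by
  have hsc : (Real.sin (2 * π * t) : ℂ) ^ 2 + (Real.cos (2 * π * t) : ℂ) ^ 2 = 1 := by
    exact_mod_cast Real.sin_sq_add_cos_sq (2 * π * t)
  simp only [w, k, ofReal_sub, ofReal_mul, ofReal_div, ofReal_ofNat]
  linear_combination (-(1 : ℂ)) * sqrt_three_sq + (169 / 7056 + 7225 / 7056 * I ^ 2) * hsc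
    + (7225 / 7056 : ℂ) * I_sq

lemma k_ne_zero (t : ℝ) : k t ≠ 0 := by
  intro h
  simp only [k, Complex.ext_iff, add_re, add_im, ofReal_re, ofReal_im, re_ofReal_mul,
    im_ofReal_mul, I_re, I_im, mul_zero, mul_one, zero_re, zero_im, add_zero, zero_add] at h
  have hc : Real.cos (2 * π * t) = 0 := by linarith
  have hs : Real.sin (2 * π * t) = 0 := by linarith
  simpa [hc, hs] using Real.sin_sq_add_cos_sq (2 * π * t)

lemma hasDerivAt_w (t : ℝ) : HasDerivAt w (-π * k t) t := by
  have hθ : HasDerivAt (fun s : ℝ => 2 * π * s) (2 * π) t := by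
    simpa using (hasDerivAt_id t).const_mul (2 * π)
  have hsin := (((Real.hasDerivAt_sin _).comp t hθ).const_mul (13 / 168)).const_sub (√3 / 2)
  have hcos := ((Real.hasDerivAt_cos _).comp t hθ).const_mul (85 / 168)
  refine (hsin.ofReal_comp.add (hcos.ofReal_comp.mul_const I)).congr_deriv (f := w) ?_
  simp only [k]
  push_cast
  ring

lemma w_contDiff : ContDiff ℝ 1 w := by unfold w; fun_prop
lemma k_contDiff : ContDiff ℝ 1 k := by unfold k; fun_prop

lemma w_re (t : ℝ) : (w t).re = √3 / 2 - 13 / 168 * Real.sin (2 * π * t) := by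
  simp only [w, add_re, ofReal_re, re_ofReal_mul, I_re, mul_zero, add_zero]

lemma w_im (t : ℝ) : (w t).im = 85 / 168 * Real.cos (2 * π * t) := by
  simp only [w, add_im, ofReal_im, im_ofReal_mul, I_im, mul_one, zero_add]

lemma w_re_mem (t : ℝ) : 3 / 4 < (w t).re ∧ (w t).re < 1 := by
  have := sqrt_three_mem
  have := Real.neg_one_le_sin (2 * π * t)
  have := Real.sin_le_one (2 * π * t)
  rw [w_re]
  constructor <;> linarith

lemma abs_w_im_le (t : ℝ) : |(w t).im| ≤ 51 / 100 := by
  rw [w_im, abs_mul, abs_of_pos (by norm_num : (0 : ℝ) < 85 / 168)]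
  nlinarith [Real.abs_cos_le_one (2 * π * t)]

lemma abs_w_im_lt_re (t : ℝ) : |(w t).im| < (w t).re := by
  linarith [abs_w_im_le t, (w_re_mem t).1]

lemma abs_im_sq_add_one_lt_re {z : ℂ} (hre : 3 / 4 < z.re ∧ z.re < 1) (him : |z.im| ≤ 51 / 100) :
    |(z ^ 2 + 1).im| < (z ^ 2 + 1).re := by
  obtain ⟨hu₁, hu₂⟩ := abs_le.mp him
  simp only [sq, add_re, add_im, mul_re, mul_im, one_re, one_im, add_zero]
  rw [abs_lt]
  constructor <;> nlinarith

lemma abs_im_sq_add_sqrt_three_mul_add_one_lt_re {z : ℂ} (hre : 3 / 4 < z.re ∧ z.re < 1)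
    (him : |z.im| ≤ 51 / 100) : |(z ^ 2 + √3 * z + 1).im| < (z ^ 2 + √3 * z + 1).re := by
  obtain ⟨hu₁, hu₂⟩ := abs_le.mp him
  have := sqrt_three_mem
  simp only [sq, add_re, add_im, mul_re, mul_im, one_re, one_im, ofReal_re, ofReal_im,
    add_zero, zero_mul, sub_zero]
  rw [abs_lt]
  constructor <;> nlinarith

lemma q_re_pos (t : ℝ) : 0 < (q t).re :=
  re_mul_pos_of_abs_im_lt_re
    (abs_im_sq_add_sqrt_three_mul_add_one_lt_re (w_re_mem t) (abs_w_im_le t))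
    (abs_im_sq_add_one_lt_re (w_re_mem t) (abs_w_im_le t))

lemma q_contDiff : ContDiff ℝ 1 q := by unfold q; have := w_contDiff; fun_prop

lemma sqrt_q_contDiff : ContDiff ℝ 1 fun t => q t ^ (2⁻¹ : ℂ) := by
  refine contDiff_iff_contDiffAt.mpr fun t => ?_
  have hslit : q t ∈ slitPlane := mem_slitPlane_iff.mpr (Or.inl (q_re_pos t))
  exact ((analyticAt_id.cpow analyticAt_const hslit).contDiffAt.restrict_scalars ℝ).comp t
    q_contDiff.contDiffAt

lemma sqrt_q_ne_zero (t : ℝ) : q t ^ (2⁻¹ : ℂ) ≠ 0 :=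
  ne_zero_of_re_pos (re_pos_of_abs_im_lt_re (abs_im_cpow_inv_two_lt_re (q_re_pos t)))

lemma on_curve (t : ℝ) : (k t / 2 * q t ^ (2⁻¹ : ℂ)) ^ 2 = (η * w t) ^ 6 - 1 := by
  rw [mul_pow, cpow_ofNat_inv_pow, div_pow, k_sq, mul_pow, η_pow_six, q]
  linear_combination (w t ^ 2 * (w t ^ 2 + 1)) * sqrt_three_sq

/-- `x = η w` winds once around the branch points `1` and `ζ`; `y` is smooth because `q` stays in
the right half-plane, away from the branch cut of the square root. -/
def loop : CurveLoop where
  γ t := (η * w t, k t / 2 * q t ^ (2⁻¹ : ℂ))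
  smooth := (contDiff_const.mul w_contDiff).prodMk ((k_contDiff.div_const 2).mul sqrt_q_contDiff)
  on_curve := on_curve
  y_ne_zero t := mul_ne_zero (div_ne_zero (k_ne_zero t) two_ne_zero) (sqrt_q_ne_zero t)
  closed := by simp [w, k, q]
lemma period_loop (j : ℕ) :
    period j loop = -2 * π * η ^ (j + 1) * ∫ t in (0 : ℝ)..1, w t ^ j * (q t ^ (2⁻¹ : ℂ))⁻¹ := by
  rw [period, ← integral_const_mul]
  refine integral_congr fun t _ => ?_
  have hx : deriv (fun s => η * w s) t = η * (-π * k t) := ((hasDerivAt_w t).const_mul η).deriv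
  simp only [loop, hx]
  field_simp [k_ne_zero t, sqrt_q_ne_zero t]
  ring

lemma period_loop_ne_zero {j : ℕ} (hj : j ≤ 1) : period j loop ≠ 0 := by
  rw [period_loop]
  refine mul_ne_zero (mul_ne_zero (by simp [Real.pi_ne_zero]) (pow_ne_zero _ η_ne_zero)) ?_
  refine intervalIntegral_ne_zero_of_re_pos zero_lt_one
    ((w_contDiff.continuous.pow j).mul (sqrt_q_contDiff.continuous.inv₀ sqrt_q_ne_zero))
    fun t => re_mul_pos_of_abs_im_lt_re ?_
      (abs_im_inv_lt_re_inv (abs_im_cpow_inv_two_lt_re (q_re_pos t)))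
  interval_cases j
  · simp
  · simpa using abs_w_im_lt_re t

end LawsonLoop

end

open LawsonLoop in
/-- the genus 2 hyperelliptic curve `y² = x⁶ − 1` has period matrix
`Ω = (i/√3)·[[2, −1], [−1, 2]]` with respect to a suitable canonical homology basis
`(a₁, a₂, b₁, b₂)`: there is a basis `ζ₁, ζ₂` of the holomorphic 1-forms (given by
coefficients `c` with respect to `ω_j = x^{j-1} dx/y`, `j = 1, 2`) normalized so that its
`a`-periods are the identity, whose `b`-periods form the matrix `Ω`. -/
theorem period_matrix_of_lawson_curve :
    ∃ (a b : Fin 2 → CurveLoop) (c : Fin 2 → Fin 2 → ℂ),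
      (∀ i k : Fin 2,
        ∑ j : Fin 2, c i j * period (j : ℕ) (a k) = if i = k then 1 else 0) ∧
      (∀ i k : Fin 2,
        ∑ j : Fin 2, c i j * period (j : ℕ) (b k)
          = Complex.I / (Real.sqrt 3 : ℂ) * (if i = k then 2 else -1)) := by
  have h₀ := period_loop_ne_zero (j := 0) zero_le_one
  have h₁ := period_loop_ne_zero (j := 1) le_rfl
  refine ⟨![loop, (loop.rotate (ζ ^ 4) (ζ_pow_pow_six 4)).swapSheets],
    ![loop.rotate (ζ ^ 1) (ζ_pow_pow_six 1), loop.rotate (ζ ^ 3) (ζ_pow_pow_six 3)],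
    ![![(1 + ζ) / (3 * period 0 loop), (2 - ζ) / (3 * period 1 loop)],
      ![(1 - 2 * ζ) / (3 * period 0 loop), (2 * ζ - 1) / (3 * period 1 loop)]], ?_, ?_⟩ <;>
  · simp only [Fin.forall_fin_two, Fin.sum_univ_two, Matrix.cons_val_zero, Matrix.cons_val_one,
      Fin.val_zero, Fin.val_one, CurveLoop.period_rotate,
      CurveLoop.period_swapSheets, I_div_sqrt_three]
    grind [ζ_sq]
end
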